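/- Let C be a finite non-degenerate projective configuration with lines l₀,…,lₙ. For every a in the subgroup U of A generated by the elements a⁽⁰⁾_{i,p}, a⁽¹⁾_{i,p}, a⁽²⁾_{i,p₁,p₂}, and for every (i,p) ∈ 𝒜, the element τ(a; i, p) = [[xᵢ, a(i,p)], s_p] + [xᵢ, Σ_{j : lⱼ incident to p} [xⱼ, a(j,p)]] of the free Lie ring L lies in R₃. -/

import Mathlib

open scoped Classical

namespace Rybnikov8

/- A finite non-degenerate projective configuration with lines `l₀, …, lₙ`
(indexed by `Fin (n+1)`) and points of type `P`, incidence `inc`.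
`L` is the free Lie ring on `x₁, …, xₙ` (indexed by `Fin n`, with `x i`
corresponding to `x_{i+1}`, i.e. to the line `l_{i.succ}`), and `H = ℤⁿ`. -/

variable {n : ℕ} {P : Type*}

abbrev L (n : ℕ) := FreeLieAlgebra ℤ (Fin n)

/-- The generator `x_{i+1}` of the free Lie ring. -/
noncomputable def x (i : Fin n) : L n := FreeLieAlgebra.of ℤ i

/-- The embedding of `H = ℤⁿ` into the free Lie ring, `v ↦ Σᵢ vᵢ • xᵢ`. -/
noncomputable def hmap (v : Fin n → ℤ) : L n := ∑ i, v i • x i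

/-- `s_p = Σ_{j : l_j incident to p} x_j` (sum over `1 ≤ j ≤ n`). -/
noncomputable def s (inc : Fin (n + 1) → P → Prop) [Fintype P] (p : P) : L n :=
  ∑ j ∈ Finset.univ.filter (fun j : Fin n => inc j.succ p), x j

/-- `𝒜 = {(i,p) : p ∈ 𝒫₀, l_{i.succ} incident to p}`. -/
def A' (inc : Fin (n + 1) → P → Prop) : Type _ :=
  {z : Fin n × P // ¬ inc 0 z.2 ∧ inc z.1.succ z.2}

/-- The additive subgroup `R₂ ⊆ L`, spanned by the `[xᵢ, s_p]`, `(i,p) ∈ 𝒜`. -/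
noncomputable def R2 (inc : Fin (n + 1) → P → Prop) [Fintype P] : AddSubgroup (L n) :=
  AddSubgroup.closure {y | ∃ z : A' inc, y = ⁅x z.val.1, s inc z.val.2⁆}

/-- The additive subgroup `R₃ = [H, R₂] ⊆ L`. -/
noncomputable def R3 (inc : Fin (n + 1) → P → Prop) [Fintype P] : AddSubgroup (L n) :=
  AddSubgroup.closure {y | ∃ (k : Fin n) (r : L n), r ∈ R2 inc ∧ y = ⁅x k, r⁆}

/-- `s_p` as an element of `H = ℤⁿ`. -/
noncomputable def sH (inc : Fin (n + 1) → P → Prop) (p : P) : Fin n → ℤ :=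
  fun k => if inc k.succ p then 1 else 0

/-- The generators `a⁽⁰⁾_{i,p}` of `U` (for `(i,p) ∈ 𝒜`):
`a⁽⁰⁾_{i,p}(j,q) = δ_{ij} δ_{pq} xᵢ`. -/
noncomputable def a0 (inc : Fin (n + 1) → P → Prop) (z : A' inc) :
    A' inc → (Fin n → ℤ) :=
  fun w => if w.val = z.val then Pi.single z.val.1 1 else 0

/-- The generators `a⁽¹⁾_{i,p}` of `U` (for `1 ≤ i ≤ n`, `p ∈ 𝒫₀`):
`a⁽¹⁾_{i,p}(j,q) = δ_{pq} xᵢ`. -/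
noncomputable def a1 (inc : Fin (n + 1) → P → Prop) (i : Fin n) (p : P) :
    A' inc → (Fin n → ℤ) :=
  fun w => if w.val.2 = p then Pi.single i 1 else 0

/-- The generators `a⁽²⁾_{i,p₁,p₂}` of `U` (for `(i,p₁), (i,p₂) ∈ 𝒜`):
`a⁽²⁾_{i,p₁,p₂}(j,q) = δ_{ij} δ_{p₁ q} s_{p₂}`. -/
noncomputable def a2 (inc : Fin (n + 1) → P → Prop) (i : Fin n) (p₁ p₂ : P) :
    A' inc → (Fin n → ℤ) :=
  fun w => if w.val = (i, p₁) then sH inc p₂ else 0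

/-- The subgroup `U` of `A = H^𝒜` generated by the `a⁽⁰⁾`, `a⁽¹⁾`, `a⁽²⁾`. -/
noncomputable def U (inc : Fin (n + 1) → P → Prop) :
    AddSubgroup (A' inc → (Fin n → ℤ)) :=
  AddSubgroup.closure
    ({f | ∃ z : A' inc, f = a0 inc z} ∪
     {f | ∃ (i : Fin n) (p : P), ¬ inc 0 p ∧ f = a1 inc i p} ∪
     {f | ∃ (i : Fin n) (p₁ p₂ : P), ¬ inc 0 p₁ ∧ inc i.succ p₁ ∧
        ¬ inc 0 p₂ ∧ inc i.succ p₂ ∧ f = a2 inc i p₁ p₂})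

/-- `τ(a; i, p) = [[xᵢ, a(i,p)], s_p] + [xᵢ, Σ_{j : l_j ∋ p} [x_j, a(j,p)]]`. -/
noncomputable def tau (inc : Fin (n + 1) → P → Prop) [Fintype P]
    (a : A' inc → (Fin n → ℤ)) (z : A' inc) : L n :=
  ⁅⁅x z.val.1, hmap (a z)⁆, s inc z.val.2⁆ +
    ⁅x z.val.1, ∑ j : Fin n,
      if h : inc j.succ z.val.2 then ⁅x j, hmap (a ⟨(j, z.val.2), ⟨z.prop.1, h⟩⟩)⁆
      else 0⁆

/-! τ(·; i, p) is additive, so it suffices to check the generators of `U`. If every bracket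
`[x_j, a(j, q)]` lies in `R₂`, then so does the inner sum of `τ`, and `[[xᵢ, a(i,p)], s_p] =
-[s_p, [xᵢ, a(i,p)]]` lies in `R₃` because `s_p ∈ H`; this covers `a⁽⁰⁾`, where each bracket is
`[x_j, x_j] = 0`, and `a⁽²⁾`, where each bracket is `0` or `[xᵢ, s_{p₂}]`. The generator `a⁽¹⁾`
depends only on the point, with value `y` at `p`, and the Jacobi identity collapses
`τ = [[xᵢ, y], s_p] + [xᵢ, [s_p, y]]` to `-[y, [xᵢ, s_p]] ∈ R₃`. -/

lemma lie_lie_add_lie_lie_eq_neg {M : Type*} [LieRing M] (a b c : M) :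
    ⁅⁅a, b⁆, c⁆ + ⁅a, ⁅c, b⁆⁆ = -⁅b, ⁅a, c⁆⁆ := by
  rw [← lie_skew c, lie_lie, lie_neg]
  abel

lemma dite_add_zero {p : Prop} [Decidable p] {M : Type*} [AddZeroClass M] (f g : p → M) :
    (if h : p then f h + g h else 0) = (if h : p then f h else 0) + if h : p then g h else 0 := by
  split <;> simp

lemma hmap_zero : hmap (0 : Fin n → ℤ) = 0 := by
  simp [hmap]

lemma hmap_add (v w : Fin n → ℤ) : hmap (v + w) = hmap v + hmap w := by
  simp [hmap, add_smul, Finset.sum_add_distrib]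

lemma hmap_single (i : Fin n) : hmap (Pi.single i 1) = x i := by
  simp [hmap, Pi.single_apply]

lemma hmap_sH [Fintype P] (inc : Fin (n + 1) → P → Prop) (p : P) :
    hmap (sH inc p) = s inc p := by
  simp [hmap, sH, s, Finset.sum_filter]

lemma lie_x_hmap_a0 (inc : Fin (n + 1) → P → Prop) (z₀ w : A' inc) :
    ⁅x w.val.1, hmap (a0 inc z₀ w)⁆ = 0 := by
  unfold a0
  split_ifs with h
  · rw [hmap_single, h, lie_self]
  · rw [hmap_zero, lie_zero]

section Tau

variable [Fintype P] (inc : Fin (n + 1) → P → Prop)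

lemma lie_x_s_mem_R2 (w : A' inc) : ⁅x w.val.1, s inc w.val.2⁆ ∈ R2 inc :=
  AddSubgroup.subset_closure ⟨w, rfl⟩

lemma lie_x_mem_R3 (k : Fin n) {r : L n} (hr : r ∈ R2 inc) : ⁅x k, r⁆ ∈ R3 inc :=
  AddSubgroup.subset_closure ⟨k, r, hr, rfl⟩

lemma lie_hmap_mem_R3 (v : Fin n → ℤ) {r : L n} (hr : r ∈ R2 inc) : ⁅hmap v, r⁆ ∈ R3 inc := by
  rw [hmap, sum_lie]
  refine sum_mem fun k _ => ?_
  rw [smul_lie]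
  exact zsmul_mem (lie_x_mem_R3 inc k hr) _

lemma lie_x_hmap_a2_mem_R2 {i : Fin n} {p₁ p₂ : P} (hp₂ : ¬ inc 0 p₂ ∧ inc i.succ p₂)
    (w : A' inc) : ⁅x w.val.1, hmap (a2 inc i p₁ p₂ w)⁆ ∈ R2 inc := by
  unfold a2
  split_ifs with h
  · rw [hmap_sH, h]
    exact lie_x_s_mem_R2 inc ⟨(i, p₂), hp₂⟩
  · rw [hmap_zero, lie_zero]
    exact zero_mem _

lemma tau_add (a b : A' inc → Fin n → ℤ) (z : A' inc) :
    tau inc (a + b) z = tau inc a z + tau inc b z := by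
  unfold tau
  -- `Pi.add_apply` does not fire on `(a + b) ⟨_, _⟩` inside the `dite`
  rw [Pi.add_def]
  simp only [hmap_add, lie_add, add_lie, dite_add_zero, Finset.sum_add_distrib]
  abel

noncomputable def tauHom (z : A' inc) : (A' inc → Fin n → ℤ) →+ L n :=
  AddMonoidHom.mk' (tau inc · z) fun a b => tau_add inc a b z

lemma tauHom_apply (z : A' inc) (a : A' inc → Fin n → ℤ) : tauHom inc z a = tau inc a z :=
  rfl

lemma tau_mem_R3_of_forall_lie_mem_R2 {a : A' inc → Fin n → ℤ}
    (ha : ∀ w, ⁅x w.val.1, hmap (a w)⁆ ∈ R2 inc) (z : A' inc) : tau inc a z ∈ R3 inc := by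
  refine add_mem ?_ (lie_x_mem_R3 inc _ (sum_mem fun j _ => ?_))
  · rw [← lie_skew, ← hmap_sH]
    exact neg_mem (lie_hmap_mem_R3 inc _ (ha z))
  · split_ifs with h
    · exact ha ⟨(j, z.val.2), z.prop.1, h⟩
    · exact zero_mem _

lemma tau_of_point (g : P → Fin n → ℤ) (z : A' inc) :
    tau inc (fun w => g w.val.2) z = -⁅hmap (g z.val.2), ⁅x z.val.1, s inc z.val.2⁆⁆ := by
  have hsum : (∑ j : Fin n, if inc j.succ z.val.2 then ⁅x j, hmap (g z.val.2)⁆ else 0) =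
      ⁅s inc z.val.2, hmap (g z.val.2)⁆ := by
    rw [s, sum_lie]
    exact (Finset.sum_filter _ _).symm
  unfold tau
  simp only [dite_eq_ite]
  rw [hsum]
  exact lie_lie_add_lie_lie_eq_neg _ _ _

end Tau

theorem U_subset_ker_tau_general
    [Fintype P] (inc : Fin (n + 1) → P → Prop)
    (a : A' inc → (Fin n → ℤ)) (ha : a ∈ U inc) (z : A' inc) :
    tau inc a z ∈ R3 inc := by
  suffices U inc ≤ (R3 inc).comap (tauHom inc z) from this ha
  refine (AddSubgroup.closure_le _).2 fun f hf => ?_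
  rw [SetLike.mem_coe, AddSubgroup.mem_comap, tauHom_apply]
  rcases hf with (⟨z₀, rfl⟩ | ⟨i, p, -, rfl⟩) | ⟨i, p₁, p₂, -, -, hp₂, hip₂, rfl⟩
  · refine tau_mem_R3_of_forall_lie_mem_R2 inc (fun w => ?_) z
    simpa only [lie_x_hmap_a0] using zero_mem (R2 inc)
  · unfold a1
    rw [tau_of_point inc (fun q => if q = p then Pi.single i 1 else 0)]
    exact neg_mem (lie_hmap_mem_R3 inc _ (lie_x_s_mem_R2 inc z))
  · exact tau_mem_R3_of_forall_lie_mem_R2 inc (lie_x_hmap_a2_mem_R2 inc ⟨hp₂, hip₂⟩) z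

/-- **Proposition 2.3 of Rybnikov's paper.** For a finite non-degenerate projective
configuration, `U ⊆ ker τ̃`: for every `a ∈ U` and every `(i,p) ∈ 𝒜`, the element
`τ(a; i, p)` of the free Lie ring lies in `R₃`. -/
theorem U_subset_ker_tau
    [Fintype P] (inc : Fin (n + 1) → P → Prop)
    (unique_meet : ∀ i j : Fin (n + 1), i ≠ j → ∃! p : P, inc i p ∧ inc j p)
    (point_on_two : ∀ p : P, ∃ i j : Fin (n + 1), i ≠ j ∧ inc i p ∧ inc j p)
    (nondeg : ∃ p q : P, p ≠ q)
    (a : A' inc → (Fin n → ℤ)) (ha : a ∈ U inc) (z : A' inc) :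
    tau inc a z ∈ R3 inc :=
  U_subset_ker_tau_general inc a ha z

end Rybnikov8
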